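/- arXiv:2010.09096 — 8 statements merged into one kernel-verified Lean document; each statement's English description precedes it below -/
import Mathlib

section
/- Let δ, α ≥ 1 and let X be a δ-dense finite multiset of positive integers of size n that has no α-almost divisor. Then there exists a sub-multiset R of X such that: (i) |R| ≤ n·8α·log(2n)/δ; (ii) Σ(R) ≤ Σ(X)·8α·log(2n)/δ; and (iii) for every integer d with 1 < d ≤ α·μ(X)·Σ(X)/n², at least d elements of R (counted with multiplicity) are not divisible by d. -/
open Multiset

/-- Maximum element of a multiset of naturals (0 if empty). -/
def mxElt (X : Multiset ℕ) : ℕ := X.sup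

/-- Maximum multiplicity of a multiset of naturals. -/
def maxMul (X : Multiset ℕ) : ℕ := X.toFinset.sup fun x => X.count x

/-- The set of all subset sums of a multiset. -/
def subsetSums (X : Multiset ℕ) : Set ℕ := {s | ∃ Y ≤ X, Y.sum = s}

/-- `X` is `δ`-dense if `|X|² ≥ δ·μ(X)·mx(X)`. -/
def DenseMS (δ : ℝ) (X : Multiset ℕ) : Prop :=
  δ * maxMul X * mxElt X ≤ (Multiset.card X : ℝ) ^ 2

/-- `d > 1` is an `α`-almost divisor of `X` if the number of elements of `X` not
divisible by `d` is at most `α·μ(X)·Σ(X)/|X|²`. -/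
def AlmostDivisor (α : ℝ) (X : Multiset ℕ) (d : ℕ) : Prop :=
  1 < d ∧ ((Multiset.card (X.filter fun x => ¬ d ∣ x) : ℝ) ≤
    α * maxMul X * X.sum / (Multiset.card X : ℝ) ^ 2)

/-- A multiset is uniform if every element has the maximum multiplicity. -/
def IsUniformMS (X : Multiset ℕ) : Prop := ∀ x ∈ X, X.count x = maxMul X

/-- Number of representations `f_X(z) = μ(X) · #{(x,x') ∈ supp(X)² : x + x' = z}`. -/
def fX (X : Multiset ℕ) (z : ℕ) : ℕ :=
  maxMul X * ((X.toFinset ×ˢ X.toFinset).filter fun p => p.1 + p.2 = z).card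

/-- The bucket `B_{v,X} = {z : f_X(z) ≥ v}`. -/
def bucket (X : Multiset ℕ) (v : ℕ) : Set ℕ := {z | v ≤ fX X z}

/-!
Let `T = α μ(X) Σ(X) / n²` and `t = ⌊T⌋`. Since no prime `p ≤ t` is an `α`-almost divisor, each
such `p` fails to divide at least `t` elements of `X`. If `n < 3t` take `R = X`; otherwise pick
any `3t` elements `R₀` of `X`. A prime `p ≤ t` dividing fewer than `2t` of them already has `t`
non-multiples in `R₀`; for each remaining "bad" prime add `t` non-multiples of `p` taken from `X`.
An element `x ≤ mx(X) ≤ n²` has at most `log₂ x` distinct prime factors, so double counting shows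
there are at most `3 log₂ n` bad primes, whence `|R| ≤ 3t(1 + log₂ n)`. A divisor `d ≤ T` is
handled by its least prime factor, and density turns `t ≤ T` into the bounds on `|R|` and `Σ(R)`.
-/

namespace Multiset

lemma exists_le_card_eq {α : Type*} {s : Multiset α} {k : ℕ} (hk : k ≤ card s) :
    ∃ t ≤ s, card t = k := by
  obtain ⟨t, ht⟩ := card_pos_iff_exists_mem.1 <| by
    rw [card_powersetCard]; exact Nat.choose_pos hk
  exact ⟨t, mem_powersetCard.1 ht⟩

lemma card_finset_sup_le {ι α : Type*} [DecidableEq α] (s : Finset ι) (f : ι → Multiset α) :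
    card (s.sup f) ≤ ∑ i ∈ s, card (f i) := by
  rw [← card_sum]
  exact card_le_card <| Finset.sup_le fun i hi => Finset.single_le_sum (fun _ _ => zero_le _) hi

lemma sum_card_filter_eq_sum_map_card_filter {α β : Type*} (r : α → β → Prop)
    [∀ a b, Decidable (r a b)] (P : Finset α) (R : Multiset β) :
    ∑ p ∈ P, card (R.filter (r p)) = (R.map fun x => (P.filter (r · x)).card).sum := by
  induction R using Multiset.induction with
  | empty => simp
  | cons a s ih =>
    simp only [filter_cons, card_add, Finset.sum_add_distrib, ih, map_cons, sum_cons,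
      Finset.card_filter, apply_ite card, card_singleton, card_zero]

lemma le_card_filter_not_dvd_of_prime {R : Multiset ℕ} {t : ℕ}
    (h : ∀ p, p.Prime → p ≤ t → t ≤ card (R.filter (¬ p ∣ ·))) {d : ℕ} (hd : 1 < d)
    (hdt : d ≤ t) : t ≤ card (R.filter (¬ d ∣ ·)) :=
  (h _ (Nat.minFac_prime (by omega)) ((Nat.minFac_le (by omega)).trans hdt)).trans <|
    card_le_card <| monotone_filter_right R fun _ h hd => h ((Nat.minFac_dvd d).trans hd)

end Multiset

lemma card_filter_prime_dvd_le_log {P : Finset ℕ} (hP : ∀ p ∈ P, p.Prime) {x M : ℕ}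
    (hx : 0 < x) (hxM : x ≤ M) : (P.filter (· ∣ x)).card ≤ Nat.log 2 M := by
  refine Nat.le_log_of_pow_le one_lt_two ?_
  calc 2 ^ (P.filter (· ∣ x)).card
      ≤ ∏ p ∈ P.filter (· ∣ x), p :=
        Finset.pow_card_le_prod _ _ _ fun p hp => (hP p (Finset.mem_filter.1 hp).1).two_le
    _ ≤ x := Nat.le_of_dvd hx <| Finset.prod_primes_dvd x
        (fun p hp => (hP p (Finset.mem_filter.1 hp).1).prime) fun p hp => (Finset.mem_filter.1 hp).2
    _ ≤ M := hxM

lemma sum_card_filter_prime_dvd_le {P : Finset ℕ} (hP : ∀ p ∈ P, p.Prime) {R : Multiset ℕ}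
    {M : ℕ} (hpos : ∀ x ∈ R, 0 < x) (hM : ∀ x ∈ R, x ≤ M) :
    ∑ p ∈ P, card (R.filter (p ∣ ·)) ≤ card R * Nat.log 2 M := by
  rw [sum_card_filter_eq_sum_map_card_filter, ← smul_eq_mul,
    ← card_map fun x => (P.filter (· ∣ x)).card]
  refine sum_le_card_nsmul _ _ fun k hk => ?_
  obtain ⟨x, hx, rfl⟩ := mem_map.1 hk
  exact card_filter_prime_dvd_le_log hP (hpos x hx) (hM x hx)

theorem exists_le_card_filter_not_prime_dvd (X : Multiset ℕ) (M t : ℕ)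
    (hpos : ∀ x ∈ X, 0 < x) (hM : ∀ x ∈ X, x ≤ M)
    (ht : ∀ p, p.Prime → p ≤ t → t ≤ card (X.filter (¬ p ∣ ·))) :
    ∃ R ≤ X, 2 * card R ≤ 3 * t * (2 + Nat.log 2 M) ∧
      ∀ p, p.Prime → p ≤ t → t ≤ card (R.filter (¬ p ∣ ·)) := by
  rcases lt_or_ge (card X) (3 * t) with hsmall | hlarge
  · exact ⟨X, le_rfl, by nlinarith, ht⟩
  obtain ⟨R₀, hR₀X, hR₀⟩ := exists_le_card_eq hlarge
  choose S hSX hS using fun p => exists_le_card_eq (min_le_right t (card (X.filter (¬ p ∣ ·))))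
  set B := (Finset.range (t + 1)).filter fun p => p.Prime ∧ 2 * t ≤ card (R₀.filter (p ∣ ·))
  refine ⟨R₀ ∪ B.sup S, union_le hR₀X (Finset.sup_le fun p _ => (hSX p).trans (filter_le _ _)),
    ?_, fun p hp hpt => ?_⟩
  · have hB : B.card * (2 * t) ≤ 3 * t * Nat.log 2 M :=
      calc B.card * (2 * t) ≤ ∑ p ∈ B, card (R₀.filter (p ∣ ·)) :=
            Finset.card_nsmul_le_sum _ _ _ fun p hp => (Finset.mem_filter.1 hp).2.2
        _ ≤ card R₀ * Nat.log 2 M :=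
            sum_card_filter_prime_dvd_le (fun p hp => (Finset.mem_filter.1 hp).2.1)
              (fun x hx => hpos x (mem_of_le hR₀X hx)) fun x hx => hM x (mem_of_le hR₀X hx)
        _ = 3 * t * Nat.log 2 M := by rw [hR₀]
    have hSB : ∑ p ∈ B, card (S p) ≤ B.card * t :=
      Finset.sum_le_card_nsmul _ _ _ fun p _ => (hS p).trans_le (min_le_left _ _)
    have hR := card_le_card (union_le_add R₀ (B.sup S))
    rw [card_add, hR₀] at hR
    nlinarith [card_finset_sup_le B S]
  · by_cases hpB : p ∈ B
    · have hSp : S p ≤ (R₀ ∪ B.sup S).filter (¬ p ∣ ·) :=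
        le_filter.2 ⟨(Finset.le_sup hpB).trans (le_union_right ..),
          fun x hx => (mem_filter.1 (mem_of_le (hSX p) hx)).2⟩
      have := card_le_card hSp
      rwa [hS p, min_eq_left (ht p hp hpt)] at this
    · have hfew : card (R₀.filter (p ∣ ·)) < 2 * t := by
        by_contra! h
        exact hpB (Finset.mem_filter.2 ⟨Finset.mem_range.2 (by omega), hp, h⟩)
      have hsplit := congrArg card (filter_add_not (p ∣ ·) R₀)
      rw [card_add, hR₀] at hsplit
      have := card_le_card (filter_le_filter (¬ p ∣ ·) (le_union_left (s := R₀) (t := B.sup S)))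
      omega

lemma one_le_maxMul {X : Multiset ℕ} (hX : X ≠ 0) : 1 ≤ maxMul X := by
  obtain ⟨x, hx⟩ := exists_mem_of_ne_zero hX
  exact (one_le_count_iff_mem.2 hx).trans
    (Finset.le_sup (f := fun x => X.count x) (mem_toFinset.2 hx))

lemma le_mxElt {X : Multiset ℕ} {x : ℕ} (hx : x ∈ X) : x ≤ mxElt X := le_sup hx

lemma sum_le_card_mul_mxElt (X : Multiset ℕ) : X.sum ≤ card X * mxElt X := by
  simpa using sum_le_card_nsmul X (mxElt X) fun _ => le_mxElt

lemma lt_card_filter_not_dvd_of_not_almostDivisor {α : ℝ} {X : Multiset ℕ} {d : ℕ}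
    (h : ¬ AlmostDivisor α X d) (hd : 1 < d) :
    α * maxMul X * X.sum / (card X : ℝ) ^ 2 < card (X.filter (¬ d ∣ ·)) := by
  simpa [AlmostDivisor, hd] using h

namespace DenseMS

variable {δ : ℝ} {X : Multiset ℕ}

lemma mxElt_le_card_sq (h : DenseMS δ X) (hδ : 1 ≤ δ) (hX : X ≠ 0) :
    (mxElt X : ℝ) ≤ (card X : ℝ) ^ 2 := by
  have hμ : (1 : ℝ) ≤ maxMul X := by exact_mod_cast one_le_maxMul hX
  have : (1 : ℝ) ≤ δ * maxMul X := by nlinarith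
  unfold DenseMS at h
  nlinarith [Nat.cast_nonneg (α := ℝ) (mxElt X)]

lemma natLog_mxElt_le (h : DenseMS δ X) (hδ : 1 ≤ δ) (hX : X ≠ 0) :
    (Nat.log 2 (mxElt X) : ℝ) ≤ 2 * Real.logb 2 (card X) := by
  rcases (Nat.zero_le (mxElt X)).eq_or_lt with h0 | hpos
  · have : (1 : ℝ) ≤ card X := by exact_mod_cast card_pos.2 hX
    simp [← h0, Real.logb_nonneg one_lt_two this]
  calc (Nat.log 2 (mxElt X) : ℝ) ≤ Real.logb 2 (mxElt X) := mod_cast Real.natLog_le_logb _ _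
    _ ≤ Real.logb 2 ((card X : ℝ) ^ 2) :=
      Real.logb_le_logb_of_le one_lt_two (by exact_mod_cast hpos) (h.mxElt_le_card_sq hδ hX)
    _ = 2 * Real.logb 2 (card X) := by rw [Real.logb_pow]; norm_num

lemma mul_threshold_le {α : ℝ} (h : DenseMS δ X) (hδ : 0 ≤ δ) (hα : 0 ≤ α) :
    δ * (α * maxMul X * X.sum / (card X : ℝ) ^ 2) ≤ α * card X := by
  rcases (Nat.zero_le (card X)).eq_or_lt with h0 | hn
  · simp [← h0]
  have hsum : (X.sum : ℝ) ≤ card X * mxElt X := by exact_mod_cast sum_le_card_mul_mxElt X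
  unfold DenseMS at h
  rw [mul_div_assoc', div_le_iff₀ (by positivity)]
  nlinarith [mul_le_mul_of_nonneg_left hsum (by positivity : (0 : ℝ) ≤ α * δ * maxMul X),
    mul_le_mul_of_nonneg_left h (by positivity : (0 : ℝ) ≤ α * card X)]

lemma mul_threshold_mul_mxElt_le {α : ℝ} (h : DenseMS δ X) (hα : 0 ≤ α) :
    δ * (α * maxMul X * X.sum / (card X : ℝ) ^ 2) * mxElt X ≤ α * X.sum := by
  rcases (Nat.zero_le (card X)).eq_or_lt with h0 | hn
  · rw [← h0, Nat.cast_zero, zero_pow two_ne_zero, div_zero, mul_zero, zero_mul]; positivity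
  unfold DenseMS at h
  rw [mul_div_assoc', div_mul_eq_mul_div, div_le_iff₀ (by positivity)]
  nlinarith [mul_le_mul_of_nonneg_left h (by positivity : (0 : ℝ) ≤ α * X.sum)]

end DenseMS

theorem stmt6 (δ α : ℝ) (hδ : 1 ≤ δ) (hα : 1 ≤ α)
    (X : Multiset ℕ) (hX : X ≠ 0) (hpos : ∀ x ∈ X, 0 < x)
    (n : ℕ) (hn : n = Multiset.card X)
    (hdense : DenseMS δ X) (hnad : ∀ d : ℕ, ¬ AlmostDivisor α X d) :
    ∃ R ≤ X,
      ((Multiset.card R : ℝ) ≤ (n : ℝ) * 8 * α * Real.logb 2 (2 * n) / δ) ∧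
      ((R.sum : ℝ) ≤ (X.sum : ℝ) * 8 * α * Real.logb 2 (2 * n) / δ) ∧
      ∀ d : ℕ, 1 < d → (d : ℝ) ≤ α * maxMul X * X.sum / (n : ℝ) ^ 2 →
        d ≤ Multiset.card (R.filter fun x => ¬ d ∣ x) := by
  subst hn
  set T := α * maxMul X * X.sum / (card X : ℝ) ^ 2
  set L := Real.logb 2 (card X)
  have hT : 0 ≤ T := by positivity
  have hX1 : (1 : ℝ) ≤ card X := by exact_mod_cast card_pos.2 hX
  have hL : 0 ≤ L := Real.logb_nonneg one_lt_two hX1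
  have hlog : Real.logb 2 (2 * card X) = 1 + L := by
    rw [Real.logb_mul two_ne_zero (by positivity), Real.logb_self_eq_one one_lt_two]
  obtain ⟨R, hRX, hcard, hprime⟩ := exists_le_card_filter_not_prime_dvd X (mxElt X) ⌊T⌋₊ hpos
    (fun _ => le_mxElt) fun p hp _ =>
      Nat.floor_le_of_le (lt_card_filter_not_dvd_of_not_almostDivisor (hnad p) hp.one_lt).le
  have hK := hdense.natLog_mxElt_le hδ hX
  have hcardR : (card R : ℝ) ≤ 3 * T * (1 + L) := by
    have h : (2 * card R : ℝ) ≤ 3 * ⌊T⌋₊ * (2 + Nat.log 2 (mxElt X)) := by exact_mod_cast hcard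
    nlinarith [Nat.floor_le hT, Nat.cast_nonneg (α := ℝ) (Nat.log 2 (mxElt X))]
  have hsumR : (R.sum : ℝ) ≤ card R * mxElt X := by
    exact_mod_cast (sum_le_card_nsmul R _ fun x hx => le_mxElt (mem_of_le hRX hx)).trans_eq
      (smul_eq_mul ..)
  have hδT : δ * T ≤ α * card X := hdense.mul_threshold_le (α := α) (by linarith) (by linarith)
  have hδTmx : δ * T * mxElt X ≤ α * X.sum :=
    hdense.mul_threshold_mul_mxElt_le (α := α) (by linarith)
  rw [hlog]
  refine ⟨R, hRX, ?_, ?_, fun d hd hdT => ?_⟩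
  · rw [le_div_iff₀ (by linarith)]
    nlinarith
  · rw [le_div_iff₀ (by linarith)]
    nlinarith [mul_le_mul_of_nonneg_right hsumR (by linarith : (0 : ℝ) ≤ δ),
      mul_le_mul_of_nonneg_right hcardR (by positivity : (0 : ℝ) ≤ mxElt X * δ)]
  have hdt : d ≤ ⌊T⌋₊ := Nat.le_floor hdT
  exact hdt.trans (le_card_filter_not_dvd_of_prime hprime hd hdt)
end

section
/- Let X be a finite multiset of positive integers and let τ be a positive integer. Suppose that for every integer d with 1 < d ≤ τ, at least d elements of X (counted with multiplicity) are not divisible by d. Then for every integer d with 1 ≤ d ≤ τ, the set of subset sums S(X) is d-complete, i.e. {s mod d : s ∈ S(X)} = {0, 1, …, d−1}. -/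
open Multiset

/-! Let `A ⊆ ℤ/d` be the set of residues of subset sums of `X` and `H` its stabilizer, of index
`g ∣ d`. The image of `A` in `(ℤ/d)/H ≅ ℤ/g` has trivial stabilizer, and this persists for the
subset sums of every sub-multiset; so adjoining an element `x ≢ 0 (mod g)` strictly enlarges the
subset-sum set, since otherwise `x` would stabilize it. Hence `g ≥ 1 + #{x ∈ X : g ∤ x}`, which
contradicts the hypothesis unless `g = 1`, i.e. `A` is all of `ℤ/d`. -/

open scoped Pointwise
open AddAction

namespace Multiset

section AddCommMonoid

variable {M N : Type*} [AddCommMonoid M] [DecidableEq M]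

def subsetSum (s : Multiset M) : Finset M := (s.powerset.map sum).toFinset

theorem mem_subsetSum {s : Multiset M} {a : M} : a ∈ s.subsetSum ↔ ∃ t ≤ s, t.sum = a := by
  simp [subsetSum]

theorem zero_mem_subsetSum (s : Multiset M) : 0 ∈ s.subsetSum :=
  mem_subsetSum.2 ⟨0, zero_le s, sum_zero⟩

theorem subsetSum_cons (a : M) (s : Multiset M) :
    (a ::ₘ s).subsetSum = s.subsetSum ∪ (a +ᵥ s.subsetSum) := by
  ext b
  simp [subsetSum, powerset_cons, Finset.mem_vadd_finset]

theorem subsetSum_map [AddCommMonoid N] [DecidableEq N] (f : M →+ N) (s : Multiset M) :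
    (s.map f).subsetSum = s.subsetSum.image f := by
  induction s using Multiset.induction_on with
  | empty => simp [subsetSum]
  | cons a s ih =>
    rw [map_cons, subsetSum_cons, subsetSum_cons, ih, Finset.image_union]
    congr 1
    ext b
    simp [Finset.mem_vadd_finset]

end AddCommMonoid

section AddCommGroup

variable {G : Type*} [AddCommGroup G] [DecidableEq G]

theorem stabilizer_subsetSum_le_cons (a : G) (s : Multiset G) :
    stabilizer G s.subsetSum ≤ stabilizer G (a ::ₘ s).subsetSum := by
  intro g hg
  rw [mem_stabilizer_iff] at hg ⊢
  rw [subsetSum_cons, Finset.vadd_finset_union, vadd_comm, hg]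

theorem card_filter_ne_zero_lt_card_subsetSum (s : Multiset G)
    (hs : stabilizer G s.subsetSum = ⊥) : card (s.filter (· ≠ 0)) < s.subsetSum.card := by
  induction s using Multiset.induction_on with
  | empty => simp [subsetSum]
  | cons a s ih =>
    have ih := ih (eq_bot_mono (stabilizer_subsetSum_le_cons a s) hs)
    have hsub : s.subsetSum ⊆ (a ::ₘ s).subsetSum := by
      rw [subsetSum_cons]; exact Finset.subset_union_left
    by_cases ha : a = 0
    · rw [filter_cons_of_neg (p := (· ≠ 0)) _ (not_not.2 ha)]
      exact ih.trans_le (Finset.card_le_card hsub)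
    · rw [filter_cons_of_pos (p := (· ≠ 0)) _ ha, card_cons]
      suffices s.subsetSum ⊂ (a ::ₘ s).subsetSum by have := Finset.card_lt_card this; omega
      refine hsub.ssubset_of_ne fun heq => ha ?_
      have : a ∈ stabilizer G s.subsetSum := by
        rw [mem_stabilizer_finset_iff_vadd_finset_subset]
        calc a +ᵥ s.subsetSum ⊆ s.subsetSum ∪ (a +ᵥ s.subsetSum) := Finset.subset_union_right
          _ = s.subsetSum := by rw [← subsetSum_cons, heq]
      rwa [eq_bot_mono (stabilizer_subsetSum_le_cons a s) hs, AddSubgroup.mem_bot] at this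

theorem stabilizer_image_mk_stabilizer_eq_bot (A : Finset G)
    [DecidableEq (G ⧸ stabilizer G A)] :
    stabilizer (G ⧸ stabilizer G A) (A.image (QuotientAddGroup.mk' (stabilizer G A))) = ⊥ := by
  refine (AddSubgroup.eq_bot_iff_forall _).2 fun q hq => ?_
  induction q using QuotientAddGroup.induction_on with
  | H c =>
    rw [QuotientAddGroup.eq_zero_iff, mem_stabilizer_finset']
    intro b hb
    have : (c : G ⧸ stabilizer G A) + b ∈ A.image (QuotientAddGroup.mk' (stabilizer G A)) := by
      rw [mem_stabilizer_finset'] at hq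
      exact hq (Finset.mem_image_of_mem _ hb)
    obtain ⟨b', hb', hbb'⟩ := Finset.mem_image.1 this
    have hdiff : -b' + (c + b) ∈ stabilizer G A := by
      rw [← QuotientAddGroup.eq]; simpa using hbb'
    simpa using mem_stabilizer_finset'.1 hdiff hb'

theorem card_filter_not_mem_stabilizer_subsetSum_lt_index [Finite G] (s : Multiset G)
    [DecidablePred (· ∈ stabilizer G s.subsetSum)] :
    card (s.filter (· ∉ stabilizer G s.subsetSum)) < (stabilizer G s.subsetSum).index := by
  have : DecidableEq (G ⧸ stabilizer G s.subsetSum) := Classical.decEq _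
  have : Fintype (G ⧸ stabilizer G s.subsetSum) := Fintype.ofFinite _
  have hQ := card_filter_ne_zero_lt_card_subsetSum
    (s.map (QuotientAddGroup.mk' (stabilizer G s.subsetSum)))
    (by rw [subsetSum_map]; exact stabilizer_image_mk_stabilizer_eq_bot s.subsetSum)
  rw [filter_map, card_map] at hQ
  calc _ = card (s.filter ((· ≠ 0) ∘ QuotientAddGroup.mk' (stabilizer G s.subsetSum))) := by
        congr 1
        exact filter_congr fun x _ => by
          simp only [Function.comp, ne_eq, QuotientAddGroup.mk'_apply, QuotientAddGroup.eq_zero_iff]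
    _ < _ := hQ
    _ ≤ Fintype.card _ := Finset.card_le_univ _
    _ = _ := by rw [AddSubgroup.index_eq_card, Nat.card_eq_fintype_card]

end AddCommGroup

end Multiset

theorem ZMod.natCast_mem_addSubgroup_iff_index_dvd {d : ℕ} (H : AddSubgroup (ZMod d)) (x : ℕ) :
    (x : ZMod d) ∈ H ↔ H.index ∣ x := by
  have hgen : ∀ q : ZMod d ⧸ H, q ∈ AddSubgroup.zmultiples ((1 : ZMod d) : ZMod d ⧸ H) := by
    intro q
    induction q using QuotientAddGroup.induction_on with
    | H c =>
      refine ⟨(c.cast : ℤ), ?_⟩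
      dsimp only
      rw [← QuotientAddGroup.mk_zsmul, zsmul_one, ZMod.intCast_zmod_cast]
  rw [AddSubgroup.index_eq_card, ← addOrderOf_eq_card_of_forall_mem_zmultiples hgen,
    addOrderOf_dvd_iff_nsmul_eq_zero, ← QuotientAddGroup.mk_nsmul, nsmul_one,
    QuotientAddGroup.eq_zero_iff]

theorem stmt7_general (X : Multiset ℕ) (τ : ℕ)
    (h : ∀ d : ℕ, 1 < d → d ≤ τ → d ≤ Multiset.card (X.filter fun x => ¬ d ∣ x)) :
    ∀ d : ℕ, 1 ≤ d → d ≤ τ → ∀ r : ℕ, r < d → ∃ u ∈ subsetSums X, u % d = r := by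
  classical
  intro d hd hdτ r hr
  have : NeZero d := ⟨by omega⟩
  set A := (X.map (Nat.castAddMonoidHom (ZMod d))).subsetSum
  set H := stabilizer (ZMod d) A
  have hcount : card (X.filter fun x => ¬ H.index ∣ x) < H.index := by
    have := card_filter_not_mem_stabilizer_subsetSum_lt_index
      (X.map (Nat.castAddMonoidHom (ZMod d)))
    rwa [filter_map, card_map, filter_congr fun x _ => by
      rw [Function.comp_apply, Nat.coe_castAddMonoidHom,
        ZMod.natCast_mem_addSubgroup_iff_index_dvd]] at this
  have hdvd : H.index ∣ d := by simpa using (ZMod.natCast_mem_addSubgroup_iff_index_dvd H d).1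
  have hH : H = ⊤ := by
    by_contra hH
    have hne : H.index ≠ 1 := AddSubgroup.index_eq_one.not.2 hH
    have hle : H.index ≤ d := Nat.le_of_dvd (by omega) hdvd
    have := h H.index (by omega) (by omega)
    omega
  have hrA : (r : ZMod d) ∈ X.subsetSum.image (Nat.castAddMonoidHom (ZMod d)) := by
    have := mem_stabilizer_finset'.1 (hH ▸ AddSubgroup.mem_top (r : ZMod d)) (zero_mem_subsetSum _)
    rwa [vadd_eq_add, add_zero, subsetSum_map] at this
  obtain ⟨u, hu, hur⟩ := Finset.mem_image.1 hrA
  refine ⟨u, mem_subsetSum.1 hu, ?_⟩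
  simpa [ZMod.natCast_eq_natCast_iff', Nat.mod_eq_of_lt hr] using hur

theorem stmt7 (X : Multiset ℕ) (hpos : ∀ x ∈ X, 0 < x) (τ : ℕ) (hτ : 1 ≤ τ)
    (h : ∀ d : ℕ, 1 < d → d ≤ τ → d ≤ Multiset.card (X.filter fun x => ¬ d ∣ x)) :
    ∀ d : ℕ, 1 ≤ d → d ≤ τ → ∀ r : ℕ, r < d → ∃ u ∈ subsetSums X, u % d = r :=
  stmt7_general X τ h
end

section
/- Let X be a δ-dense finite multiset of positive integers of size n. For an integer 0 ≤ r ≤ log μ(X), define the sub-multiset X_r of X by giving each integer x multiplicity 2^r in X_r if 2^r ≤ μ(x;X) < 2^{r+1}, and multiplicity 0 otherwise (where μ(x;X) is the multiplicity of x in X). Then there exists an integer 0 ≤ r ≤ log μ(X) such that X_r is δ/(4·log²(2μ(X)))-dense and |X_r| ≥ n/(2·log(2μ(X))). -/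
open Multiset

/-- The sub-multiset `X_r` of `X`: each integer `x` with `2^r ≤ μ(x;X) < 2^(r+1)`
taken with multiplicity `2^r`, all other integers with multiplicity `0`. -/
def levelSet (X : Multiset ℕ) (r : ℕ) : Multiset ℕ :=
  ∑ x ∈ X.toFinset.filter (fun x => 2 ^ r ≤ X.count x ∧ X.count x < 2 ^ (r + 1)),
    Multiset.replicate (2 ^ r) x

/-! Grouping the support of `X` by `⌊log μ(x;X)⌋` splits it into the `log μ(X) + 1` classes
underlying the `X_r`, and the class of `X_r` carries at most `2 · |X_r|` elements of `X`
(multiplicities are below `2^(r+1)` there). By pigeonhole some `|X_r| ≥ n / (2 log 2μ(X))`;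
as `μ(X_r) ≤ μ(X)` and `mx(X_r) ≤ mx(X)`, squaring this bound gives the density. -/

namespace Multiset

variable (X : Multiset ℕ) (r : ℕ)

def levelSupport : Finset ℕ :=
  X.toFinset.filter fun x => 2 ^ r ≤ X.count x ∧ X.count x < 2 ^ (r + 1)

variable {X r}

theorem mem_levelSupport {x : ℕ} :
    x ∈ levelSupport X r ↔ x ∈ X ∧ Nat.log 2 (X.count x) = r := by
  rw [levelSupport, Finset.mem_filter, mem_toFinset, and_congr_right_iff]
  intro hx
  rw [Nat.log_eq_iff (Or.inr ⟨one_lt_two, count_ne_zero.mpr hx⟩)]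

theorem count_levelSet (y : ℕ) :
    (levelSet X r).count y = if y ∈ levelSupport X r then 2 ^ r else 0 := by
  simp only [levelSet, count_sum', count_replicate]
  exact Finset.sum_ite_eq' _ _ _

theorem card_levelSet : card (levelSet X r) = (levelSupport X r).card * 2 ^ r := by
  simp [levelSet, card_sum, levelSupport]

theorem levelSet_le : levelSet X r ≤ X := by
  refine le_iff_count.mpr fun y => ?_
  rw [count_levelSet]
  split_ifs with hy
  · exact (Finset.mem_filter.mp hy).2.1
  · exact Nat.zero_le _

theorem maxMul_levelSet_le : maxMul (levelSet X r) ≤ 2 ^ r :=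
  Finset.sup_le fun y _ => by
    rw [count_levelSet]
    split_ifs <;> simp

theorem mxElt_levelSet_le : mxElt (levelSet X r) ≤ mxElt X :=
  sup_mono (subset_of_le levelSet_le)

theorem sum_count_levelSupport_le :
    ∑ x ∈ levelSupport X r, X.count x ≤ 2 * card (levelSet X r) :=
  calc ∑ x ∈ levelSupport X r, X.count x ≤ ∑ _x ∈ levelSupport X r, 2 ^ (r + 1) :=
        Finset.sum_le_sum fun _ hx => (Finset.mem_filter.mp hx).2.2.le
    _ = 2 * card (levelSet X r) := by
        rw [Finset.sum_const, smul_eq_mul, card_levelSet]; ring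

theorem count_le_maxMul {x : ℕ} (hx : x ∈ X) : X.count x ≤ maxMul X :=
  Finset.le_sup (f := fun x => X.count x) (mem_toFinset.mpr hx)

variable (X) in
theorem card_le_sum_card_levelSet :
    card X ≤ ∑ r ∈ Finset.range (Nat.log 2 (maxMul X) + 1), 2 * card (levelSet X r) := by
  have hmaps : ∀ x ∈ X.toFinset,
      Nat.log 2 (X.count x) ∈ Finset.range (Nat.log 2 (maxMul X) + 1) := fun x hx =>
    Finset.mem_range_succ_iff.mpr (Nat.log_mono_right (count_le_maxMul (mem_toFinset.mp hx)))
  have hfiber : ∀ r, X.toFinset.filter (fun x => Nat.log 2 (X.count x) = r) = levelSupport X r :=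
    fun r => by ext x; rw [Finset.mem_filter, mem_toFinset, mem_levelSupport]
  calc card X = ∑ x ∈ X.toFinset, X.count x := (toFinset_sum_count_eq X).symm
    _ = ∑ r ∈ Finset.range (Nat.log 2 (maxMul X) + 1), ∑ x ∈ levelSupport X r, X.count x := by
        simp only [← hfiber]
        exact (Finset.sum_fiberwise_of_maps_to hmaps _).symm
    _ ≤ _ := Finset.sum_le_sum fun r _ => sum_count_levelSupport_le

variable (X) in
theorem exists_card_le_mul_card_levelSet :
    ∃ r ≤ Nat.log 2 (maxMul X),
      card X ≤ 2 * (Nat.log 2 (maxMul X) + 1) * card (levelSet X r) := by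
  set L := Nat.log 2 (maxMul X)
  obtain ⟨r, hr, hle⟩ := Finset.exists_le_of_sum_le (Finset.nonempty_range_add_one (n := L))
    (f := fun _ => card X) (g := fun r => 2 * (L + 1) * card (levelSet X r)) <| by
      calc ∑ _r ∈ Finset.range (L + 1), card X = (L + 1) * card X := by simp
        _ ≤ (L + 1) * ∑ r ∈ Finset.range (L + 1), 2 * card (levelSet X r) :=
            Nat.mul_le_mul_left _ (card_le_sum_card_levelSet X)
        _ = _ := by rw [Finset.mul_sum]; exact Finset.sum_congr rfl fun _ _ => by ring
  exact ⟨r, Finset.mem_range_succ_iff.mp hr, hle⟩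

end Multiset

theorem DenseMS.of_card_div_le {δ c : ℝ} {X Y : Multiset ℕ} (hX : DenseMS δ X)
    (hmaxMul : maxMul Y ≤ maxMul X) (hmxElt : mxElt Y ≤ mxElt X) (hc : 0 < c)
    (hcard : (Multiset.card X : ℝ) / c ≤ Multiset.card Y) : DenseMS (δ / c ^ 2) Y := by
  unfold DenseMS at *
  rcases le_or_gt δ 0 with hδ | hδ
  · have hδc : δ / c ^ 2 ≤ 0 := div_nonpos_of_nonpos_of_nonneg hδ (sq_nonneg c)
    calc δ / c ^ 2 * maxMul Y * mxElt Y ≤ 0 :=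
          mul_nonpos_of_nonpos_of_nonneg (mul_nonpos_of_nonpos_of_nonneg hδc (by positivity))
            (by positivity)
      _ ≤ (Multiset.card Y : ℝ) ^ 2 := sq_nonneg _
  calc δ / c ^ 2 * maxMul Y * mxElt Y ≤ δ / c ^ 2 * maxMul X * mxElt X := by gcongr
    _ = (δ * maxMul X * mxElt X) / c ^ 2 := by ring
    _ ≤ (Multiset.card X : ℝ) ^ 2 / c ^ 2 := by gcongr
    _ = ((Multiset.card X : ℝ) / c) ^ 2 := (div_pow _ _ _).symm
    _ ≤ (Multiset.card Y : ℝ) ^ 2 := by gcongr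

theorem natLog_two_add_one_le_logb_two_mul {m : ℕ} (hm : m ≠ 0) :
    (Nat.log 2 m + 1 : ℝ) ≤ Real.logb 2 (2 * m) := by
  have h := Real.natLog_le_logb (m * 2) 2
  rw [Nat.log_mul_base one_lt_two hm] at h
  push_cast at h
  rwa [mul_comm]

theorem stmt10_general (δ : ℝ) (X : Multiset ℕ) (hX : X ≠ 0)
    (n : ℕ) (hn : n = Multiset.card X) (hdense : DenseMS δ X) :
    ∃ r : ℕ, (r : ℝ) ≤ Real.logb 2 (maxMul X) ∧
      DenseMS (δ / (4 * (Real.logb 2 (2 * maxMul X)) ^ 2)) (levelSet X r) ∧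
      (n : ℝ) / (2 * Real.logb 2 (2 * maxMul X)) ≤ (Multiset.card (levelSet X r) : ℝ) := by
  obtain ⟨x, hx⟩ := Multiset.exists_mem_of_ne_zero hX
  have hmaxMul : maxMul X ≠ 0 :=
    ((Multiset.count_pos.mpr hx).trans_le (Multiset.count_le_maxMul hx)).ne'
  set L := Nat.log 2 (maxMul X)
  obtain ⟨r, hrL, hcard⟩ := Multiset.exists_card_le_mul_card_levelSet X
  have hlog : (L + 1 : ℝ) ≤ Real.logb 2 (2 * maxMul X) :=
    natLog_two_add_one_le_logb_two_mul hmaxMul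
  have hlog_pos : 0 < Real.logb 2 (2 * maxMul X) :=
    (Nat.cast_add_one_pos L).trans_le hlog
  have hcard' : (n : ℝ) / (2 * Real.logb 2 (2 * maxMul X)) ≤ Multiset.card (levelSet X r) := by
    rw [div_le_iff₀ (by positivity), hn]
    calc (Multiset.card X : ℝ) ≤ 2 * (L + 1) * Multiset.card (levelSet X r) := by
          exact_mod_cast hcard
      _ ≤ 2 * Real.logb 2 (2 * maxMul X) * Multiset.card (levelSet X r) := by gcongr
      _ = _ := by ring
  have hpow : 2 ^ r ≤ maxMul X :=
    (Nat.pow_le_pow_right two_pos hrL).trans (Nat.pow_log_le_self 2 hmaxMul)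
  refine ⟨r, (Nat.cast_le.mpr hrL).trans (Real.natLog_le_logb _ _), ?_, hcard'⟩
  rw [show 4 * Real.logb 2 (2 * maxMul X) ^ 2 = (2 * Real.logb 2 (2 * maxMul X)) ^ 2 by ring]
  exact hdense.of_card_div_le (Multiset.maxMul_levelSet_le.trans hpow)
    Multiset.mxElt_levelSet_le (by positivity) (hn ▸ hcard')

theorem stmt10 (δ : ℝ) (X : Multiset ℕ) (hX : X ≠ 0) (hpos : ∀ x ∈ X, 0 < x)
    (n : ℕ) (hn : n = Multiset.card X) (hdense : DenseMS δ X) :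
    ∃ r : ℕ, (r : ℝ) ≤ Real.logb 2 (maxMul X) ∧
      DenseMS (δ / (4 * (Real.logb 2 (2 * maxMul X)) ^ 2)) (levelSet X r) ∧
      (n : ℝ) / (2 * Real.logb 2 (2 * maxMul X)) ≤ (Multiset.card (levelSet X r) : ℝ) :=
  stmt10_general δ X hX n hn hdense
end

section
/- Let X be a uniform finite multiset of positive integers and let z be an integer. Then there exist k ≥ ⌊f_X(z)/2⌋ pairwise disjoint pairs of elements of X each summing to z; that is, there exists a sub-multiset of X of size 2k consisting of elements x₁, x'₁, …, x_k, x'_k with x_i + x'_i = z for all i and k ≥ ⌊f_X(z)/2⌋. -/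
open Multiset

/-! Keep the elements `x ≤ z` of the support whose partner `z - x` also lies in the support, each
with multiplicity `μ(X)`. By uniformity this is a sub-multiset of `X`; it has `f_X(z)` elements and
is invariant under `x ↦ z - x`. In such a multiset the elements below `z / 2` pair off with their
mirror images and the copies of `z / 2` pair off among themselves. -/

namespace Multiset

theorem exists_pairs_of_map_sub_eq (z : ℕ) (S : Multiset ℕ) (hle : ∀ x ∈ S, x ≤ z)
    (hsymm : S.map (z - ·) = S) :
    ∃ P : Multiset (ℕ × ℕ), (∀ p ∈ P, p.1 + p.2 = z) ∧
      P.map Prod.fst + P.map Prod.snd ≤ S ∧ card S / 2 ≤ card P := by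
  set T := S.filter (2 * · < z)
  set M := S.filter (2 * · = z)
  have hhigh : S.filter (z < 2 * ·) = T.map (z - ·) := by
    conv_lhs => rw [← hsymm]
    rw [filter_map]
    congr 1
    exact filter_congr fun x hx => by have := hle x hx; simp only [Function.comp_apply]; omega
  have hsplit : S = T + T.map (z - ·) + M := by
    rw [← hhigh]
    ext a
    simp only [T, M, count_add, count_filter]
    split_ifs <;> omega
  have hM : M = replicate (card M) (z / 2) :=
    eq_replicate.mpr ⟨rfl, fun x hx => by have := (mem_filter.mp hx).2; omega⟩
  refine ⟨T.map (fun x => (x, z - x)) + replicate (card M / 2) (z / 2, z / 2), ?_, ?_, ?_⟩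
  · intro p hp
    rcases mem_add.mp hp with hp | hp
    · obtain ⟨x, hx, rfl⟩ := mem_map.mp hp
      have := (mem_filter.mp hx).2
      dsimp only
      omega
    · obtain ⟨hM0, rfl⟩ := (mem_replicate.mp hp)
      obtain ⟨x, hx⟩ := card_pos_iff_exists_mem.mp (by omega : 0 < card M)
      have := (mem_filter.mp hx).2
      dsimp only
      omega
  · have hrep : replicate (card M / 2) (z / 2) + replicate (card M / 2) (z / 2) ≤ M := by
      rw [← replicate_add]
      conv_rhs => rw [hM]
      exact (replicate_le_replicate _).mpr (by omega)
    calc _ = T + T.map (z - ·) +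
          (replicate (card M / 2) (z / 2) + replicate (card M / 2) (z / 2)) := by
          simp only [map_add, map_map, Function.comp_def, map_id', map_replicate]
          abel
      _ ≤ S := by
          conv_rhs => rw [hsplit]
          exact add_le_add_right hrep _
  · have := congrArg card hsplit
    simp only [card_add, card_map, card_replicate] at this ⊢
    omega

end Multiset

namespace Finset

theorem card_filter_add_eq_card_filter_sub_mem (s : Finset ℕ) (z : ℕ) :
    ((s ×ˢ s).filter fun p => p.1 + p.2 = z).card =
      (s.filter fun x => x ≤ z ∧ z - x ∈ s).card := by
  refine card_nbij' Prod.fst (fun x => (x, z - x)) ?_ ?_ ?_ ?_ <;>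
    simp only [Set.MapsTo, Set.LeftInvOn, mem_coe, mem_filter, mem_product]
  · rintro ⟨x, y⟩ ⟨⟨hx, hy⟩, rfl⟩
    simpa using ⟨hx, hy⟩
  · rintro x ⟨hx, hxz, hzx⟩
    exact ⟨⟨hx, hzx⟩, Nat.add_sub_cancel' hxz⟩
  · rintro ⟨x, y⟩ ⟨-, rfl⟩
    simp
  · rintro x ⟨-, hxz, -⟩
    simp

theorem map_sub_val_filter_sub_mem (s : Finset ℕ) (z : ℕ) :
    (s.filter fun x => x ≤ z ∧ z - x ∈ s).val.map (z - ·) =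
      (s.filter fun x => x ≤ z ∧ z - x ∈ s).val := by
  set U := s.filter fun x => x ≤ z ∧ z - x ∈ s
  have hinj : Set.InjOn (z - ·) U := fun x hx y hy h => by
    have := (mem_filter.mp hx).2.1
    have := (mem_filter.mp hy).2.1
    simp only at h
    omega
  rw [← image_val_of_injOn hinj, val_inj]
  ext y
  simp only [U, mem_image, mem_filter]
  constructor
  · rintro ⟨x, ⟨hx, hxz, hzx⟩, rfl⟩
    refine ⟨hzx, Nat.sub_le z x, ?_⟩
    rwa [Nat.sub_sub_self hxz]
  · rintro ⟨hy, hyz, hzy⟩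
    refine ⟨z - y, ⟨hzy, Nat.sub_le z y, ?_⟩, Nat.sub_sub_self hyz⟩
    rwa [Nat.sub_sub_self hyz]

end Finset

theorem IsUniformMS.nsmul_val_le {X : Multiset ℕ} (hu : IsUniformMS X) {t : Finset ℕ}
    (ht : t ⊆ X.toFinset) : maxMul X • t.val ≤ X := by
  rw [le_iff_count]
  intro a
  rw [count_nsmul, count_eq_of_nodup t.nodup]
  split_ifs with ha
  · rw [hu a (mem_toFinset.mp (ht ha))]
    omega
  · simp

theorem stmt12_general (X : Multiset ℕ) (hu : IsUniformMS X) (z : ℕ) :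
    ∃ k : ℕ, fX X z / 2 ≤ k ∧ ∃ a b : Fin k → ℕ,
      (∀ i, a i + b i = z) ∧
      ((↑(List.ofFn a) + ↑(List.ofFn b) : Multiset ℕ) ≤ X) := by
  set U := X.toFinset.filter fun x => x ≤ z ∧ z - x ∈ X.toFinset
  obtain ⟨P, hsum, hle, hcard⟩ := exists_pairs_of_map_sub_eq z (maxMul X • U.val)
    (fun x hx => (Finset.mem_filter.mp (mem_of_mem_nsmul hx)).2.1)
    (by rw [map_nsmul, Finset.map_sub_val_filter_sub_mem])
  have hfX : card (maxMul X • U.val) = fX X z := by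
    rw [card_nsmul, fX, Finset.card_filter_add_eq_card_filter_sub_mem]
    rfl
  refine ⟨P.toList.length, ?_, fun i => P.toList[(i : ℕ)].1, fun i => P.toList[(i : ℕ)].2,
    fun i => hsum _ (mem_toList.mp (List.getElem_mem _)), ?_⟩
  · rw [length_toList]
    omega
  · rw [List.ofFn_getElem_eq_map, List.ofFn_getElem_eq_map, ← map_coe, ← map_coe, coe_toList]
    exact hle.trans (hu.nsmul_val_le (Finset.filter_subset _ _))

theorem stmt12 (X : Multiset ℕ) (hpos : ∀ x ∈ X, 0 < x) (hu : IsUniformMS X) (z : ℕ) :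
    ∃ k : ℕ, fX X z / 2 ≤ k ∧ ∃ a b : Fin k → ℕ,
      (∀ i, a i + b i = z) ∧
      ((↑(List.ofFn a) + ↑(List.ofFn b) : Multiset ℕ) ≤ X) :=
  stmt12_general X hu z
end

section
/- Let X be a uniform finite multiset of positive integers, and let v ≥ 1 and 1 ≤ h ≤ (v−1)/4 be integers. Then every element of the h-fold sumset B_{v,X}^h of the bucket B_{v,X} equals Σ(Y) for some sub-multiset Y of X with |Y| = 2h. -/
open Multiset

/-!
Add the pairs greedily. If `z ∈ B_{v,X}` and `Y ≤ X` with `2|Y| + 1 < v`, some pair `(x, z - x)` of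
elements of `X` still fits into `X - Y`: every ordered pair with sum `z` that does not fit has had
`μ(X)` copies of one of its entries used up by `Y` (up to one copy on the diagonal pair), and as
the pairs have distinct first and distinct second entries, these charges add up to at most
`2|Y| + 1`, while there are `f_X(z) / μ(X) ≥ v / μ(X)` such pairs.
-/

lemma Multiset.sum_count_le_card {α : Type*} [DecidableEq α] (m : Multiset α) (s : Finset α) :
    ∑ a ∈ s, m.count a ≤ card m := by
  calc ∑ a ∈ s, m.count a ≤ ∑ a ∈ s ∪ m.toFinset, m.count a :=
        Finset.sum_le_sum_of_subset Finset.subset_union_left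
    _ = card m := Multiset.sum_count_eq_card fun a ha => by simp [ha]

lemma Multiset.sum_count_comp_le_card {α ι : Type*} [DecidableEq α] (m : Multiset α)
    {s : Finset ι} {f : ι → α} (hf : Set.InjOn f s) :
    ∑ i ∈ s, m.count (f i) ≤ card m := by
  rw [← Finset.sum_image (f := fun a => m.count a) hf]
  exact m.sum_count_le_card _

section Bucket

variable {X Y : Multiset ℕ}

lemma maxMul_le_of_not_add_pair_le (hu : IsUniformMS X) (hY : Y ≤ X) {a b : ℕ} (ha : a ∈ X)
    (hb : b ∈ X) (hab : ¬ Y + {a, b} ≤ X) :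
    maxMul X ≤ Y.count a + Y.count b + if a = b then 1 else 0 := by
  obtain ⟨c, hc⟩ := not_forall.mp (mt Multiset.le_iff_count.mpr hab)
  have hYc := Multiset.le_iff_count.mp hY c
  rw [not_le, count_add, insert_eq_cons, count_cons, count_singleton] at hc
  by_cases hca : c = a
  · subst hca
    rw [hu c ha] at hc
    split_ifs at hc ⊢ <;> omega
  · by_cases hcb : c = b
    · subst hcb
      rw [hu c hb] at hc
      split_ifs at hc ⊢ <;> omega
    · simp only [hca, hcb, if_false] at hc
      omega

lemma exists_add_pair_le_of_mem_bucket (hu : IsUniformMS X) (hY : Y ≤ X) {v z : ℕ}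
    (hz : z ∈ bucket X v) (hv : 2 * card Y + 1 < v) :
    ∃ x x', x + x' = z ∧ Y + {x, x'} ≤ X := by
  by_contra! hcon
  set P := (X.toFinset ×ˢ X.toFinset).filter fun p => p.1 + p.2 = z
  have hfail : ∀ p ∈ P, maxMul X ≤ Y.count p.1 + Y.count p.2 + if p.1 = p.2 then 1 else 0 := by
    intro p hp
    simp only [P, Finset.mem_filter, Finset.mem_product, mem_toFinset] at hp
    exact maxMul_le_of_not_add_pair_le hu hY hp.1.1 hp.1.2 (hcon _ _ hp.2)
  have hsum : ∀ p ∈ P, p.1 + p.2 = z := fun p hp => (Finset.mem_filter.mp hp).2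
  have hfst : ∑ p ∈ P, Y.count p.1 ≤ card Y := Y.sum_count_comp_le_card fun p hp q hq h =>
    Prod.ext h (by have := hsum p hp; have := hsum q hq; omega)
  have hsnd : ∑ p ∈ P, Y.count p.2 ≤ card Y := Y.sum_count_comp_le_card fun p hp q hq h =>
    Prod.ext (by have := hsum p hp; have := hsum q hq; omega) h
  have hdiag : ∑ p ∈ P, (if p.1 = p.2 then 1 else 0) ≤ 1 := by
    rw [Finset.sum_boole, Nat.cast_id, Finset.card_le_one]
    intro p hp q hq
    simp only [Finset.mem_filter] at hp hq
    have := hsum p hp.1; have := hsum q hq.1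
    exact Prod.ext (by omega) (by omega)
  have : v ≤ 2 * card Y + 1 := calc
    v ≤ maxMul X * P.card := hz
    _ = ∑ p ∈ P, maxMul X := by rw [Finset.sum_const, smul_eq_mul, mul_comm]
    _ ≤ ∑ p ∈ P, (Y.count p.1 + Y.count p.2 + if p.1 = p.2 then 1 else 0) :=
      Finset.sum_le_sum hfail
    _ ≤ 2 * card Y + 1 := by
      rw [Finset.sum_add_distrib, Finset.sum_add_distrib]
      omega
  omega

lemma exists_le_card_sum_eq_of_forall_mem_bucket (hu : IsUniformMS X) {v : ℕ} {ι : Type*}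
    (g : ι → ℕ) (s : Finset ι) (hg : ∀ i ∈ s, g i ∈ bucket X v) (hs : 4 * s.card ≤ v + 2) :
    ∃ Y ≤ X, card Y = 2 * s.card ∧ Y.sum = ∑ i ∈ s, g i := by
  classical
  induction s using Finset.induction_on with
  | empty => exact ⟨0, zero_le X, by simp⟩
  | insert i s hi ih =>
    rw [Finset.card_insert_of_notMem hi] at hs ⊢
    obtain ⟨Y, hYX, hYcard, hYsum⟩ :=
      ih (fun j hj => hg j (Finset.mem_insert_of_mem hj)) (by omega)
    obtain ⟨x, x', hxx', hle⟩ := exists_add_pair_le_of_mem_bucket hu hYX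
      (hg i (Finset.mem_insert_self i s)) (by omega)
    refine ⟨Y + {x, x'}, hle, ?_, ?_⟩
    · simp [hYcard, mul_add]
    · simp [Finset.sum_insert hi, hYsum, ← hxx', add_comm, add_left_comm]

end Bucket

theorem stmt13_general (X : Multiset ℕ) (hu : IsUniformMS X)
    (v h : ℕ) (hhv : (h : ℝ) ≤ ((v : ℝ) - 1) / 4)
    (w : ℕ) (g : Fin h → ℕ) (hg : ∀ i, g i ∈ bucket X v) (hw : ∑ i, g i = w) :
    ∃ Y ≤ X, Multiset.card Y = 2 * h ∧ Y.sum = w := by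
  have hv : 4 * h + 1 ≤ v := by
    rw [le_div_iff₀ (by norm_num)] at hhv
    exact_mod_cast (by push_cast; linarith : ((4 * h + 1 : ℕ) : ℝ) ≤ v)
  obtain ⟨Y, hYX, hYcard, hYsum⟩ := exists_le_card_sum_eq_of_forall_mem_bucket hu g Finset.univ
    (fun i _ => hg i) (by simp; omega)
  exact ⟨Y, hYX, by simpa using hYcard, hYsum.trans hw⟩

theorem stmt13 (X : Multiset ℕ) (hX : X ≠ 0) (hpos : ∀ x ∈ X, 0 < x) (hu : IsUniformMS X)
    (v h : ℕ) (hv : 1 ≤ v) (hh : 1 ≤ h) (hhv : (h : ℝ) ≤ ((v : ℝ) - 1) / 4)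
    (w : ℕ) (g : Fin h → ℕ) (hg : ∀ i, g i ∈ bucket X v) (hw : ∑ i, g i = w) :
    ∃ Y ≤ X, Multiset.card Y = 2 * h ∧ Y.sum = w :=
  stmt13_general X hu v h hhv w g hg hw
end

section
/- Let X be a uniform finite multiset of positive integers of size n that is 7-dense. Then there exists an integer v with 1 < v ≤ n such that the bucket B_{v,X} satisfies |B_{v,X}| ≥ n/(3·μ(X)) + n²/(3·v·μ(X)·log(2n)). -/
/-!
Double counting: the bucket sizes `C v = |B_{v,X} ∩ [0, 2 mx(X)]|` satisfy
`∑_{v=1}^{n} C v = ∑_z f_X(z) = μ |supp X|² = n²/μ`. The first term is at most `2 mx(X)`,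
which density bounds by `2n²/(7μ)`. If every `C v` with `1 < v ≤ n` were below
`n/(3μ) + n²/(3vμ log(2n))`, then, as `∑_{1<v≤n} 1/v ≤ ln n ≤ log(2n)`, the remaining terms
would sum to less than `2n²/(3μ)`, and `2/7 + 2/3 < 1`.
-/

open Multiset

def addRepCount {M : Type*} [Add M] [DecidableEq M] (S : Finset M) (z : M) : ℕ :=
  ((S ×ˢ S).filter fun p => p.1 + p.2 = z).card

theorem fX_eq_maxMul_mul_addRepCount (X : Multiset ℕ) (z : ℕ) :
    fX X z = maxMul X * addRepCount X.toFinset z :=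
  rfl

theorem addRepCount_le_card {M : Type*} [Add M] [IsLeftCancelAdd M] [DecidableEq M]
    (S : Finset M) (z : M) : addRepCount S z ≤ S.card :=
  Finset.card_le_card_of_injOn Prod.fst
    (fun _ hp => (Finset.mem_product.mp (Finset.mem_filter.mp hp).1).1)
    (fun _ hp _ hq hpq => Prod.ext hpq <| add_left_cancel <|
      hpq ▸ (Finset.mem_filter.mp hp).2.trans (Finset.mem_filter.mp hq).2.symm)

theorem addRepCount_zero {S : Finset ℕ} (hS : 0 ∉ S) : addRepCount S 0 = 0 := by
  refine Finset.card_eq_zero.mpr (Finset.filter_eq_empty_iff.mpr fun p hp hp0 => hS ?_)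
  rw [← Nat.eq_zero_of_add_eq_zero_right hp0]
  exact (Finset.mem_product.mp hp).1

theorem sum_addRepCount_range {S : Finset ℕ} {m : ℕ} (hS : ∀ x ∈ S, x ≤ m) :
    ∑ z ∈ Finset.range (2 * m + 1), addRepCount S z = S.card ^ 2 := by
  rw [sq, ← Finset.card_product]
  refine (Finset.card_eq_sum_card_fiberwise fun p hp => ?_).symm
  have h1 := hS p.1 (Finset.mem_product.mp hp).1
  have h2 := hS p.2 (Finset.mem_product.mp hp).2
  simp only [Finset.coe_range, Set.mem_Iio]
  omega

theorem sum_card_filter_le_eq_sum {ι : Type*} (R : Finset ι) (f : ι → ℕ) {N : ℕ}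
    (hf : ∀ z ∈ R, f z ≤ N) :
    ∑ v ∈ Finset.Icc 1 N, (R.filter fun z => v ≤ f z).card = ∑ z ∈ R, f z := by
  simp only [Finset.card_filter]
  rw [Finset.sum_comm]
  refine Finset.sum_congr rfl fun z hz => ?_
  have hIcc : (Finset.Icc 1 N).filter (· ≤ f z) = Finset.Icc 1 (f z) := by
    ext v
    simp only [Finset.mem_filter, Finset.mem_Icc]
    have := hf z hz
    omega
  rw [← Finset.card_filter, hIcc, Nat.card_Icc, Nat.add_sub_cancel]

namespace IsUniformMS

variable {X : Multiset ℕ}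

theorem card_eq (hu : IsUniformMS X) : card X = X.toFinset.card * maxMul X := by
  rw [← toFinset_sum_count_eq, Finset.sum_congr rfl fun x hx => hu x (mem_toFinset.mp hx),
    Finset.sum_const, smul_eq_mul]

theorem maxMul_pos (hu : IsUniformMS X) (hX : X ≠ 0) : 0 < maxMul X := by
  obtain ⟨x, hx⟩ := exists_mem_of_ne_zero hX
  exact hu x hx ▸ count_pos.mpr hx

theorem fX_le_card (hu : IsUniformMS X) (z : ℕ) : fX X z ≤ card X := by
  rw [fX_eq_maxMul_mul_addRepCount, hu.card_eq, mul_comm _ (maxMul X)]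
  exact Nat.mul_le_mul_left _ (addRepCount_le_card _ z)

theorem maxMul_mul_sum_fX (hu : IsUniformMS X) :
    maxMul X * ∑ z ∈ Finset.range (2 * mxElt X + 1), fX X z = card X ^ 2 := by
  have hS : ∀ x ∈ X.toFinset, x ≤ mxElt X := fun x hx => le_sup (mem_toFinset.mp hx)
  simp only [fX_eq_maxMul_mul_addRepCount, ← Finset.mul_sum]
  rw [sum_addRepCount_range hS, hu.card_eq]
  ring

end IsUniformMS

theorem card_filter_one_le_fX_le_two_mul_mxElt {X : Multiset ℕ} (hpos : ∀ x ∈ X, 0 < x) :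
    ((Finset.range (2 * mxElt X + 1)).filter fun z => 1 ≤ fX X z).card ≤ 2 * mxElt X := by
  have h0 : fX X 0 = 0 := by
    rw [fX_eq_maxMul_mul_addRepCount,
      addRepCount_zero fun h => (hpos 0 (mem_toFinset.mp h)).false, mul_zero]
  calc _ ≤ ((Finset.range (2 * mxElt X + 1)).erase 0).card :=
        Finset.card_le_card fun z hz => by
          obtain ⟨hzR, hz1⟩ := Finset.mem_filter.mp hz
          exact Finset.mem_erase.mpr ⟨fun hz0 => by simp [hz0, h0] at hz1, hzR⟩
    _ = 2 * mxElt X := by simp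

theorem sum_Ioc_inv_le_log (n : ℕ) : ∑ v ∈ Finset.Ioc 1 n, (v : ℝ)⁻¹ ≤ Real.log n := by
  rcases Nat.eq_zero_or_pos n with rfl | hn
  · simp
  have h := harmonic_le_one_add_log n
  rw [harmonic_eq_sum_Icc, Finset.Icc_eq_cons_Ioc hn, Finset.sum_cons] at h
  push_cast at h
  linarith

theorem log_le_logb_two_mul {x : ℝ} (hx : 1 ≤ x) : Real.log x ≤ Real.logb 2 (2 * x) := by
  rw [Real.logb, Real.log_mul two_ne_zero (by positivity), le_div_iff₀ (Real.log_pos one_lt_two)]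
  have := Real.log_two_lt_d9
  nlinarith [Real.log_nonneg hx, Real.log_pos one_lt_two]

theorem exists_add_div_le_of_lt_sum (C : ℕ → ℝ) {a b : ℝ} {n : ℕ} (ha : 0 ≤ a) (hb : 0 ≤ b)
    (h : n * a + b * Real.log n < ∑ v ∈ Finset.Ioc 1 n, C v) :
    ∃ v, 1 < v ∧ v ≤ n ∧ a + b / v ≤ C v := by
  suffices ∑ v ∈ Finset.Ioc 1 n, (a + b / v) < ∑ v ∈ Finset.Ioc 1 n, C v by
    obtain ⟨v, hv, hlt⟩ := Finset.exists_lt_of_sum_lt this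
    exact ⟨v, (Finset.mem_Ioc.mp hv).1, (Finset.mem_Ioc.mp hv).2, hlt.le⟩
  calc ∑ v ∈ Finset.Ioc 1 n, (a + b / v)
      = (n - 1 : ℕ) * a + b * ∑ v ∈ Finset.Ioc 1 n, (v : ℝ)⁻¹ := by
        simp [Finset.sum_add_distrib, Finset.mul_sum, div_eq_mul_inv]
    _ ≤ n * a + b * Real.log n := by
        gcongr
        · exact Nat.sub_le n 1
        · exact sum_Ioc_inv_le_log n
    _ < _ := h

theorem stmt14 (X : Multiset ℕ) (hX : X ≠ 0) (hpos : ∀ x ∈ X, 0 < x)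
    (n : ℕ) (hn : n = Multiset.card X) (hu : IsUniformMS X) (hdense : DenseMS 7 X) :
    ∃ v : ℕ, 1 < v ∧ v ≤ n ∧
      (n : ℝ) / (3 * maxMul X) + (n : ℝ) ^ 2 / (3 * v * maxMul X * Real.logb 2 (2 * n)) ≤
        (((Finset.range (2 * mxElt X + 1)).filter fun z => v ≤ fX X z).card : ℝ) := by
  set μ := maxMul X
  set C : ℕ → ℕ := fun v => ((Finset.range (2 * mxElt X + 1)).filter fun z => v ≤ fX X z).card
  set L := Real.logb 2 (2 * n)
  have hμ : (0 : ℝ) < μ := by exact_mod_cast hu.maxMul_pos hX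
  have hn1 : 1 ≤ n := hn ▸ card_pos.mpr hX
  have hn1' : (1 : ℝ) ≤ n := by exact_mod_cast hn1
  have hL : 0 < L := Real.logb_pos one_lt_two (by linarith)
  have htotal : (n : ℝ) ^ 2 = μ * (C 1 + ∑ v ∈ Finset.Ioc 1 n, (C v : ℝ)) := by
    have h := hu.maxMul_mul_sum_fX
    rw [← sum_card_filter_le_eq_sum _ _ fun z _ => hu.fX_le_card z, ← hn,
      Finset.Icc_eq_cons_Ioc hn1, Finset.sum_cons] at h
    exact_mod_cast h.symm
  have hC1 : (C 1 : ℝ) ≤ 2 * mxElt X := by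
    exact_mod_cast card_filter_one_le_fX_le_two_mul_mxElt hpos
  have hmx : 7 * μ * (mxElt X : ℝ) ≤ n ^ 2 := hn ▸ hdense
  have hlog : (n : ℝ) ^ 2 / (3 * μ * L) * Real.log n ≤ n ^ 2 / (3 * μ) :=
    calc (n : ℝ) ^ 2 / (3 * μ * L) * Real.log n
        = (n : ℝ) ^ 2 / (3 * μ) * (Real.log n / L) := by ring
      _ ≤ (n : ℝ) ^ 2 / (3 * μ) :=
        mul_le_of_le_one_right (by positivity) ((div_le_one hL).mpr (log_le_logb_two_mul hn1'))
  obtain ⟨v, hv1, hvn, hv⟩ := exists_add_div_le_of_lt_sum (fun v => (C v : ℝ))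
    (n := n) (a := n / (3 * μ)) (b := n ^ 2 / (3 * μ * L)) (by positivity) (by positivity) <| by
      refine (add_le_add_right hlog _).trans_lt ?_
      rw [← mul_div_assoc, ← sq, ← add_div, div_lt_iff₀ (by positivity)]
      nlinarith [mul_le_mul_of_nonneg_left hC1 hμ.le]
  refine ⟨v, hv1, hvn, le_of_eq_of_le ?_ hv⟩
  ring
end

section
/- Let τ ≥ 1 and s ≥ 2 be integers, and let R' be a finite multiset of 2τ positive integers, each at most s. Then the number of primes p such that at least τ elements of R' (counted with multiplicity) are divisible by p is at most 2·log s. -/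
open Multiset

/-! Every prime `p` counted divides at least `τ` elements of `R'`, so `p ^ τ` divides `∏ R'`.
These prime powers are coprime, hence `(2 ^ k) ^ τ ≤ ∏ R' ≤ s ^ (2τ)` for `k` the number of such
primes, i.e. `2 ^ k ≤ s ^ 2`. -/

theorem Multiset.pow_card_filter_dvd_prod {M : Type*} [CommMonoid M] (p : M) (R : Multiset M)
    [DecidablePred (fun x : M => p ∣ x)] : p ^ card (R.filter (p ∣ ·)) ∣ R.prod := by
  refine dvd_trans ?_ (prod_dvd_prod_of_le (filter_le (p ∣ ·) R))
  rw [← prod_replicate, ← map_const']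
  simpa only [map_id] using
    prod_dvd_prod_of_dvd (S := R.filter (p ∣ ·)) (fun _ => p) id fun a ha => (mem_filter.1 ha).2

theorem Nat.prod_pow_dvd_of_forall_pow_dvd {P : Finset ℕ} {k n : ℕ} (hP : ∀ p ∈ P, p.Prime)
    (hdvd : ∀ p ∈ P, p ^ k ∣ n) : (∏ p ∈ P, p) ^ k ∣ n := by
  classical
  induction P using Finset.induction_on with
  | empty => simp
  | insert a t hat ih =>
    simp only [Finset.mem_insert, forall_eq_or_imp] at hP hdvd
    have hcop : Nat.Coprime a (∏ q ∈ t, q) := Nat.Coprime.prod_right fun q hq =>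
      (Nat.coprime_primes hP.1 (hP.2 q hq)).2 (ne_of_mem_of_not_mem hq hat).symm
    rw [Finset.prod_insert hat, mul_pow]
    exact (hcop.pow k k).mul_dvd_of_dvd_of_dvd hdvd.1 (ih hP.2 hdvd.2)

theorem Nat.two_pow_card_pow_le {P : Finset ℕ} {k n : ℕ} (hn : n ≠ 0) (hP : ∀ p ∈ P, p.Prime)
    (hdvd : ∀ p ∈ P, p ^ k ∣ n) : (2 ^ P.card) ^ k ≤ n :=
  calc (2 ^ P.card) ^ k ≤ (∏ p ∈ P, p) ^ k :=
        Nat.pow_le_pow_left (Finset.pow_card_le_prod _ _ _ fun p hp => (hP p hp).two_le) k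
    _ ≤ n := Nat.le_of_dvd (Nat.pos_of_ne_zero hn) (Nat.prod_pow_dvd_of_forall_pow_dvd hP hdvd)

theorem stmt18_general (τ s : ℕ) (hτ : 1 ≤ τ)
    (R' : Multiset ℕ) (hpos : ∀ x ∈ R', 0 < x) (hle : ∀ x ∈ R', x ≤ s)
    (hcard : Multiset.card R' = 2 * τ) :
    (((Finset.range (s + 1)).filter fun p =>
        p.Prime ∧ τ ≤ Multiset.card (R'.filter fun x => p ∣ x)).card : ℝ)
      ≤ 2 * Real.logb 2 s := by
  set P := (Finset.range (s + 1)).filter fun p =>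
    p.Prime ∧ τ ≤ Multiset.card (R'.filter fun x => p ∣ x)
  have hdvd : ∀ p ∈ P, p ^ τ ∣ R'.prod := fun p hp =>
    (pow_dvd_pow p (Finset.mem_filter.1 hp).2.2).trans (R'.pow_card_filter_dvd_prod p)
  have hpow : (2 ^ P.card) ^ τ ≤ (s ^ 2) ^ τ :=
    calc (2 ^ P.card) ^ τ ≤ R'.prod := Nat.two_pow_card_pow_le (Multiset.prod_pos hpos).ne'
          (fun p hp => (Finset.mem_filter.1 hp).2.1) hdvd
      _ ≤ s ^ Multiset.card R' := Multiset.prod_le_pow_card R' s hle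
      _ = (s ^ 2) ^ τ := by rw [hcard, pow_mul]
  have h2 : 2 ^ P.card ≤ s ^ 2 := (Nat.pow_le_pow_iff_left (by omega)).1 hpow
  have hs_sq : (0 : ℝ) < (s : ℝ) ^ 2 := by exact_mod_cast (Nat.one_le_two_pow.trans h2)
  calc (P.card : ℝ) ≤ Real.logb 2 ((s : ℝ) ^ 2) := by
        rw [Real.le_logb_iff_rpow_le one_lt_two hs_sq, Real.rpow_natCast]
        exact_mod_cast h2
    _ = 2 * Real.logb 2 s := by rw [Real.logb_pow, Nat.cast_ofNat]

theorem stmt18 (τ s : ℕ) (hτ : 1 ≤ τ) (hs : 2 ≤ s)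
    (R' : Multiset ℕ) (hpos : ∀ x ∈ R', 0 < x) (hle : ∀ x ∈ R', x ≤ s)
    (hcard : Multiset.card R' = 2 * τ) :
    (((Finset.range (s + 1)).filter fun p =>
        p.Prime ∧ τ ≤ Multiset.card (R'.filter fun x => p ∣ x)).card : ℝ)
      ≤ 2 * Real.logb 2 s :=
  stmt18_general τ s hτ R' hpos hle hcard
end

section
/- Let k ≥ 3, U ≥ 1, P ≥ 1, Q ≥ 1 and m ≥ 1 be integers, let Z ⊆ {1, …, U} be a nonempty finite set of integers, and let T be a positive integer with T ≤ k·U. Define the sets X₁ := {8k²·U·P + 4k·P·z + 2P : z ∈ Z}, X₂ := {Q·8k²·U·P + 4k·P·j + 1 : j ∈ {1, …, P}}, X₃ := {8k²·U·P + 4k·P·j : j ∈ {1, …, m}}, X := X₁ ∪ X₂ ∪ X₃, and t := (k + P·Q)·8k²·U·P + (T + P(P+1)/2)·4k·P + 2k·P + P. Then X₁, X₂, X₃ are pairwise disjoint, and there exists a subset A ⊆ X with Σ(A) = t if and only if there exists a subset B ⊆ Z with |B| = k and Σ(B) = T. -/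
open Multiset

/-!
Write `L = 8k²UP` and `w = 4kP`, so that the elements of `X₁`, `X₂`, `X₃` are `L + w z + 2P`,
`Q L + w j + 1` and `L + w j`. Parity separates `X₂` from the other two sets, and `X₁` and `X₃`
differ modulo `w`. If `Σ A = t`, reduce modulo `2P`, which divides `L` and `w`: only the `+ 1`s
of the at most `P` elements of `A ∩ X₂` survive, against `P` in `t`, so `X₂ ⊆ A`. What is left
reads `(a + c) L + w S + 2P a = k L + w T + 2P k`, with `a = |A ∩ X₁|`, `c = |A ∩ X₃|` and
`S` the sum of the `z`'s and `j`'s involved. As `w T + 2P k < L`, this forces `a + c ≤ k`, and then modulo `w` it gives `2P a = 2P k`. Hence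
`a = k`, `c = 0`, and the `z`'s of `A ∩ X₁` sum to `T`.
-/

open Finset

theorem Nat.eq_of_add_mul_eq_add_mul_of_lt {n r₁ r₂ q₁ q₂ : ℕ} (h₁ : r₁ < n) (h₂ : r₂ < n)
    (h : r₁ + n * q₁ = r₂ + n * q₂) : r₁ = r₂ := by
  simpa [Nat.add_mul_mod_self_left, Nat.mod_eq_of_lt h₁, Nat.mod_eq_of_lt h₂] using
    congrArg (· % n) h

theorem Finset.sum_Icc_one_id (n : ℕ) : ∑ i ∈ Finset.Icc 1 n, i = n * (n + 1) / 2 := by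
  induction n with
  | zero => simp
  | succ n ih =>
    rw [sum_Icc_succ_top (by omega), ih,
      show (n + 1) * (n + 1 + 1) = n * (n + 1) + 2 * (n + 1) by ring]
    omega

theorem Finset.disjoint_image_image_of_ne {α β γ : Type*} [DecidableEq γ] {f : α → γ}
    {g : β → γ} (h : ∀ a b, f a ≠ g b) (s : Finset α) (t : Finset β) :
    Disjoint (s.image f) (t.image g) := by
  simp only [disjoint_left, mem_image]
  rintro _ ⟨a, -, rfl⟩ ⟨b, -, hb⟩
  exact h a b hb.symm

theorem Finset.exists_sum_eq_of_subset_union_image {α β : Type*} [DecidableEq β]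
    [AddCommMonoid β] {f₁ f₂ f₃ : α → β} (hf₁ : f₁.Injective) (hf₂ : f₂.Injective)
    (hf₃ : f₃.Injective) {Z₁ Z₂ Z₃ : Finset α} {A : Finset β}
    (h₁₂ : Disjoint (Z₁.image f₁) (Z₂.image f₂)) (h₁₃ : Disjoint (Z₁.image f₁) (Z₃.image f₃))
    (h₂₃ : Disjoint (Z₂.image f₂) (Z₃.image f₃))
    (hA : A ⊆ Z₁.image f₁ ∪ Z₂.image f₂ ∪ Z₃.image f₃) :
    ∃ s₁ ⊆ Z₁, ∃ s₂ ⊆ Z₂, ∃ s₃ ⊆ Z₃,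
      ∑ x ∈ A, x = ∑ a ∈ s₁, f₁ a + ∑ a ∈ s₂, f₂ a + ∑ a ∈ s₃, f₃ a := by
  obtain ⟨s₁, hs₁, hA₁⟩ := subset_image_iff.mp (inter_subset_right (s₁ := A) (s₂ := Z₁.image f₁))
  obtain ⟨s₂, hs₂, hA₂⟩ := subset_image_iff.mp (inter_subset_right (s₁ := A) (s₂ := Z₂.image f₂))
  obtain ⟨s₃, hs₃, hA₃⟩ := subset_image_iff.mp (inter_subset_right (s₁ := A) (s₂ := Z₃.image f₃))
  refine ⟨s₁, hs₁, s₂, hs₂, s₃, hs₃, ?_⟩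
  have hsplit : A = A ∩ Z₁.image f₁ ∪ A ∩ Z₂.image f₂ ∪ A ∩ Z₃.image f₃ := by
    rw [← inter_union_distrib_left, ← inter_union_distrib_left, inter_eq_left.mpr hA]
  rw [hsplit, sum_union, sum_union, ← hA₁, ← hA₂, ← hA₃, sum_image hf₁.injOn,
    sum_image hf₂.injOn, sum_image hf₃.injOn]
  · exact h₁₂.mono inter_subset_right inter_subset_right
  · rw [disjoint_union_left]
    exact ⟨h₁₃.mono inter_subset_right inter_subset_right,
      h₂₃.mono inter_subset_right inter_subset_right⟩

namespace KSumReduction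

def enc₁ (k U P z : ℕ) : ℕ := 8 * k ^ 2 * U * P + 4 * k * P * z + 2 * P

def enc₂ (k U P Q j : ℕ) : ℕ := Q * (8 * k ^ 2 * U * P) + 4 * k * P * j + 1

def enc₃ (k U P j : ℕ) : ℕ := 8 * k ^ 2 * U * P + 4 * k * P * j

def target (k U P Q T : ℕ) : ℕ :=
  (k + P * Q) * (8 * k ^ 2 * U * P) + (T + P * (P + 1) / 2) * (4 * k * P) + 2 * k * P + P

variable {k U P Q : ℕ}

theorem enc₁_injective (hk : 0 < k) (hP : 0 < P) : (enc₁ k U P).Injective := by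
  intro a b h
  simpa [enc₁, hk.ne', hP.ne'] using h

theorem enc₂_injective (hk : 0 < k) (hP : 0 < P) : (enc₂ k U P Q).Injective := by
  intro a b h
  simpa [enc₂, hk.ne', hP.ne'] using h

theorem enc₃_injective (hk : 0 < k) (hP : 0 < P) : (enc₃ k U P).Injective := by
  intro a b h
  simpa [enc₃, hk.ne', hP.ne'] using h

theorem even_enc₁ (z : ℕ) : Even (enc₁ k U P z) :=
  ⟨4 * k ^ 2 * U * P + 2 * k * P * z + P, by unfold enc₁; ring⟩

theorem odd_enc₂ (j : ℕ) : Odd (enc₂ k U P Q j) :=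
  ⟨Q * (4 * k ^ 2 * U * P) + 2 * k * P * j, by unfold enc₂; ring⟩

theorem even_enc₃ (j : ℕ) : Even (enc₃ k U P j) :=
  ⟨4 * k ^ 2 * U * P + 2 * k * P * j, by unfold enc₃; ring⟩

theorem enc₁_ne_enc₂ (z j : ℕ) : enc₁ k U P z ≠ enc₂ k U P Q j := fun h =>
  Nat.not_even_iff_odd.mpr (odd_enc₂ j) (h ▸ even_enc₁ z)

theorem enc₂_ne_enc₃ (j i : ℕ) : enc₂ k U P Q j ≠ enc₃ k U P i := fun h =>
  Nat.not_even_iff_odd.mpr (odd_enc₂ j) (h ▸ even_enc₃ i)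

theorem enc₁_ne_enc₃ (hk : 0 < k) (hP : 0 < P) (z j : ℕ) : enc₁ k U P z ≠ enc₃ k U P j := by
  intro h
  have := Nat.eq_of_add_mul_eq_add_mul_of_lt (n := 4 * k * P) (r₁ := 2 * P) (r₂ := 0)
    (q₁ := 2 * k * U + z) (q₂ := 2 * k * U + j) (by nlinarith) (by positivity)
    (by unfold enc₁ enc₃ at h; linear_combination h)
  omega

theorem sum_enc₁ (s : Finset ℕ) :
    ∑ z ∈ s, enc₁ k U P z = #s * (8 * k ^ 2 * U * P) + 4 * k * P * ∑ z ∈ s, z + 2 * P * #s := by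
  simp only [enc₁, sum_add_distrib, sum_const, smul_eq_mul, mul_sum]
  ring

theorem sum_enc₂ (s : Finset ℕ) :
    ∑ j ∈ s, enc₂ k U P Q j = #s * (Q * (8 * k ^ 2 * U * P)) + 4 * k * P * ∑ j ∈ s, j + #s := by
  simp only [enc₂, sum_add_distrib, sum_const, smul_eq_mul, mul_sum, mul_one]

theorem sum_enc₃ (s : Finset ℕ) :
    ∑ j ∈ s, enc₃ k U P j = #s * (8 * k ^ 2 * U * P) + 4 * k * P * ∑ j ∈ s, j := by
  simp only [enc₃, sum_add_distrib, sum_const, smul_eq_mul, mul_sum]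

theorem eq_of_weighted_sum_eq (hk : 0 < k) (hU : 0 < U) (hP : 0 < P) {T a c S : ℕ}
    (hT : T ≤ k * U) (h : (a + c) * (8 * k ^ 2 * U * P) + 4 * k * P * S + 2 * P * a
      = k * (8 * k ^ 2 * U * P) + 4 * k * P * T + 2 * P * k) :
    a = k ∧ c = 0 ∧ S = T := by
  have hsmall : 4 * k * P * T + 2 * P * k < 8 * k ^ 2 * U * P := by
    have hkU : 1 ≤ k * U := Nat.one_le_iff_ne_zero.mpr (by positivity)
    have hkP : 0 < k * P := by positivity
    nlinarith [Nat.mul_le_mul_left (4 * k * P) hT]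
  have hac : a + c ≤ k := by
    by_contra! hlt
    nlinarith [Nat.mul_le_mul_right (8 * k ^ 2 * U * P) hlt, Nat.zero_le (k * P * S),
      Nat.zero_le (P * a)]
  have ha : a = k := by
    have := Nat.eq_of_add_mul_eq_add_mul_of_lt (n := 4 * k * P) (r₁ := 2 * P * a)
      (r₂ := 2 * P * k) (q₁ := (a + c) * (2 * k * U) + S) (q₂ := k * (2 * k * U) + T)
      (by nlinarith) (by nlinarith) (by linear_combination h)
    exact Nat.eq_of_mul_eq_mul_left (by positivity) this
  obtain rfl : c = 0 := by omega
  refine ⟨ha, rfl, Nat.eq_of_mul_eq_mul_left (by positivity : 0 < 4 * k * P) ?_⟩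
  subst ha
  linear_combination h

theorem card_eq_and_sum_eq_of_sum_eq_target (hk : 0 < k) (hU : 0 < U) (hP : 0 < P) {T : ℕ}
    (hT : T ≤ k * U) {s₁ s₂ s₃ : Finset ℕ} (hs₂ : s₂ ⊆ Finset.Icc 1 P)
    (h : ∑ z ∈ s₁, enc₁ k U P z + ∑ j ∈ s₂, enc₂ k U P Q j + ∑ j ∈ s₃, enc₃ k U P j
      = target k U P Q T) :
    #s₁ = k ∧ ∑ z ∈ s₁, z = T := by
  rw [sum_enc₁, sum_enc₂, sum_enc₃, target] at h
  have hcard₂ : #s₂ = P := by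
    have hle : #s₂ ≤ P := by simpa using card_le_card hs₂
    exact Nat.eq_of_add_mul_eq_add_mul_of_lt (n := 2 * P) (r₁ := #s₂) (r₂ := P)
      (q₁ := (#s₁ + #s₃ + #s₂ * Q) * (4 * k ^ 2 * U)
        + 2 * k * (∑ z ∈ s₁, z + ∑ j ∈ s₂, j + ∑ j ∈ s₃, j) + #s₁)
      (q₂ := (k + P * Q) * (4 * k ^ 2 * U) + 2 * k * (T + P * (P + 1) / 2) + k)
      (by omega) (by omega) (by linear_combination h)
  rw [hcard₂, eq_of_subset_of_card_le hs₂ (by simp [hcard₂]), sum_Icc_one_id] at h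
  obtain ⟨h₁, h₃, hS⟩ := eq_of_weighted_sum_eq hk hU hP (a := #s₁) (c := #s₃)
    (S := ∑ z ∈ s₁, z + ∑ j ∈ s₃, j) hT (by linear_combination h)
  rw [Finset.card_eq_zero.mp h₃, sum_empty, add_zero] at hS
  exact ⟨h₁, hS⟩

theorem sum_enc_eq_target {T : ℕ} {B : Finset ℕ} (hB : #B = k) (hS : ∑ z ∈ B, z = T) :
    ∑ z ∈ B, enc₁ k U P z + ∑ j ∈ Finset.Icc 1 P, enc₂ k U P Q j = target k U P Q T := by
  rw [sum_enc₁, sum_enc₂, sum_Icc_one_id, target, hB, hS, Nat.card_Icc, Nat.add_sub_cancel]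
  ring

end KSumReduction

open KSumReduction in
theorem stmt19_general (k U P Q m : ℕ) (hk : 3 ≤ k) (hU : 1 ≤ U) (hP : 1 ≤ P)
    (Z : Finset ℕ) (T : ℕ) (hT : T ≤ k * U)
    (X₁ X₂ X₃ : Finset ℕ) (t : ℕ)
    (hX₁ : X₁ = Z.image fun z => 8 * k ^ 2 * U * P + 4 * k * P * z + 2 * P)
    (hX₂ : X₂ = (Finset.Icc 1 P).image fun j => Q * (8 * k ^ 2 * U * P) + 4 * k * P * j + 1)
    (hX₃ : X₃ = (Finset.Icc 1 m).image fun j => 8 * k ^ 2 * U * P + 4 * k * P * j)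
    (ht : t = (k + P * Q) * (8 * k ^ 2 * U * P) + (T + P * (P + 1) / 2) * (4 * k * P)
      + 2 * k * P + P) :
    Disjoint X₁ X₂ ∧ Disjoint X₁ X₃ ∧ Disjoint X₂ X₃ ∧
      ((∃ A ⊆ X₁ ∪ X₂ ∪ X₃, ∑ x ∈ A, x = t) ↔ ∃ B ⊆ Z, B.card = k ∧ ∑ b ∈ B, b = T) := by
  have hk₀ : 0 < k := by omega
  subst hX₁ hX₂ hX₃ ht
  have h₁₂ : Disjoint (Z.image (enc₁ k U P)) ((Finset.Icc 1 P).image (enc₂ k U P Q)) :=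
    disjoint_image_image_of_ne enc₁_ne_enc₂ _ _
  have h₁₃ : Disjoint (Z.image (enc₁ k U P)) ((Finset.Icc 1 m).image (enc₃ k U P)) :=
    disjoint_image_image_of_ne (enc₁_ne_enc₃ hk₀ hP) _ _
  have h₂₃ :
      Disjoint ((Finset.Icc 1 P).image (enc₂ k U P Q)) ((Finset.Icc 1 m).image (enc₃ k U P)) :=
    disjoint_image_image_of_ne enc₂_ne_enc₃ _ _
  refine ⟨h₁₂, h₁₃, h₂₃, fun ⟨A, hA, hsum⟩ => ?_, fun ⟨B, hB, hcard, hsum⟩ => ?_⟩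
  · obtain ⟨s₁, hs₁, s₂, hs₂, s₃, -, hA⟩ := exists_sum_eq_of_subset_union_image
      (enc₁_injective hk₀ hP) (enc₂_injective hk₀ hP) (enc₃_injective hk₀ hP) h₁₂ h₁₃ h₂₃ hA
    exact ⟨s₁, hs₁, card_eq_and_sum_eq_of_sum_eq_target hk₀ hU hP hT hs₂ (hA ▸ hsum)⟩
  · refine ⟨B.image (enc₁ k U P) ∪ (Finset.Icc 1 P).image (enc₂ k U P Q),
      (union_subset_union (image_subset_image hB) subset_rfl).trans subset_union_left, ?_⟩
    rw [sum_union (h₁₂.mono_left (image_subset_image hB)),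
      sum_image (enc₁_injective hk₀ hP).injOn, sum_image (enc₂_injective hk₀ hP).injOn]
    exact sum_enc_eq_target hcard hsum

theorem stmt19 (k U P Q m : ℕ) (hk : 3 ≤ k) (hU : 1 ≤ U) (hP : 1 ≤ P) (hQ : 1 ≤ Q)
    (hm : 1 ≤ m) (Z : Finset ℕ) (hZne : Z.Nonempty) (hZ : Z ⊆ Finset.Icc 1 U)
    (T : ℕ) (hT0 : 0 < T) (hT : T ≤ k * U)
    (X₁ X₂ X₃ : Finset ℕ) (t : ℕ)
    (hX₁ : X₁ = Z.image fun z => 8 * k ^ 2 * U * P + 4 * k * P * z + 2 * P)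
    (hX₂ : X₂ = (Finset.Icc 1 P).image fun j => Q * (8 * k ^ 2 * U * P) + 4 * k * P * j + 1)
    (hX₃ : X₃ = (Finset.Icc 1 m).image fun j => 8 * k ^ 2 * U * P + 4 * k * P * j)
    (ht : t = (k + P * Q) * (8 * k ^ 2 * U * P) + (T + P * (P + 1) / 2) * (4 * k * P)
      + 2 * k * P + P) :
    Disjoint X₁ X₂ ∧ Disjoint X₁ X₃ ∧ Disjoint X₂ X₃ ∧
      ((∃ A ⊆ X₁ ∪ X₂ ∪ X₃, ∑ x ∈ A, x = t) ↔ ∃ B ⊆ Z, B.card = k ∧ ∑ b ∈ B, b = T) :=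
  stmt19_general k U P Q m hk hU hP Z T hT X₁ X₂ X₃ t hX₁ hX₂ hX₃ ht
end
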